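/- Let V_1, V_2, V_3 ∈ ℝ² be non-collinear, let m ≥ 1, and let f be m times continuously differentiable on a neighborhood of the triangle. Then the generalized Taylor polynomial of order m with respect to V_1 interpolates f at all three vertices: P_m[f](V_1) = f(V_1), P_m[f](V_2) = f(V_2), and P_m[f](V_3) = f(V_3). -/

import Mathlib

open Filter Finset
open scoped BigOperators Topology

noncomputable section

abbrev E2 : Type := EuclideanSpace ℝ (Fin 2)

def e0 : E2 := EuclideanSpace.single 0 1
def e1 : E2 := EuclideanSpace.single 1 1

/-- Directional derivative of `f` along `v`. -/
def Dv (v : E2) (f : E2 → ℝ) : E2 → ℝ := fun x => fderiv ℝ f x v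

/-- Iterated mixed directional derivative `D_u^a D_v^b f`. -/
def DD (u v : E2) (a b : ℕ) (f : E2 → ℝ) : E2 → ℝ := (Dv u)^[a] ((Dv v)^[b] f)

/-- Partial derivative `∂^{a+b} f / ∂x^a ∂y^b`. -/
def pd (a b : ℕ) (f : E2 → ℝ) : E2 → ℝ := DD e0 e1 a b f

/-- Twice the signed area determinant. -/
def detA (P Q R : E2) : ℝ := (Q 0 - P 0) * (R 1 - P 1) - (R 0 - P 0) * (Q 1 - P 1)

def lam1 (V1 V2 V3 x : E2) : ℝ := detA x V2 V3 / detA V1 V2 V3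
def lam2 (V1 V2 V3 x : E2) : ℝ := detA V1 x V3 / detA V1 V2 V3
def lam3 (V1 V2 V3 x : E2) : ℝ := detA V1 V2 x / detA V1 V2 V3

def rmax (V1 V2 V3 : E2) : ℝ := max (max ‖V1 - V2‖ ‖V1 - V3‖) ‖V2 - V3‖

/-- `S_n(t) = B_n(t) - B_n(0)`. -/
def Sber (n : ℕ) (t : ℝ) : ℝ :=
  Polynomial.aeval t (Polynomial.bernoulli n) - Polynomial.aeval (0 : ℝ) (Polynomial.bernoulli n)

/-- The generalized Taylor polynomial on the triangle `V1 V2 V3` with respect to `V1`. -/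
def Pgen (V1 V2 V3 : E2) (m : ℕ) (f : E2 → ℝ) (x : E2) : ℝ :=
  f V1
  + ∑ j ∈ Finset.Icc 1 m,
      (DD (V2 - V1) (V3 - V1) 0 (j - 1) f V3 - DD (V2 - V1) (V3 - V1) 0 (j - 1) f V1)
        * Sber j (lam2 V1 V2 V3 x + lam3 V1 V2 V3 x) / (Nat.factorial j)
  + ∑ i ∈ Finset.Icc 1 m, ∑ j ∈ Finset.Icc 1 (m - i + 1),
      ((-1 : ℝ) ^ (i + j) *
          (DD (V1 - V2) (V3 - V2) (j - 1) (i - 1) f V2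
            - DD (V1 - V2) (V3 - V2) (j - 1) (i - 1) f V1)
        + (-1 : ℝ) ^ j *
          (DD (V1 - V3) (V2 - V3) (j - 1) (i - 1) f V3
            - DD (V1 - V3) (V2 - V3) (j - 1) (i - 1) f V1))
      * ((lam2 V1 V2 V3 x + lam3 V1 V2 V3 x) ^ (i - 1)
          * Sber i (lam2 V1 V2 V3 x / (lam2 V1 V2 V3 x + lam3 V1 V2 V3 x))
          / (Nat.factorial i))
      * (Sber j (lam2 V1 V2 V3 x + lam3 V1 V2 V3 x) / (Nat.factorial j))

/-- The Taylor polynomial of order `m` of `f` at `V`. -/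
def Tpoly (m : ℕ) (f : E2 → ℝ) (V x : E2) : ℝ :=
  ∑ a ∈ Finset.range (m + 1), ∑ b ∈ Finset.range (m + 1 - a),
    pd a b f V / (Nat.factorial a * Nat.factorial b) * (x 0 - V 0) ^ a * (x 1 - V 1) ^ b

/-! At a vertex, `λ₂ + λ₃` and `λ₂ / (λ₂ + λ₃)` are `0` or `1`, and `S_n(0) = 0`,
`S_n(1) = δ_{n,1}` (because `B_n(1) = B_n(0)` for `n ≠ 1`). So at most the terms with
`i = j = 1` survive; they involve only values of `f`, and telescope to the value at the vertex. -/

lemma Sber_eval_zero (n : ℕ) : Sber n 0 = 0 := by simp [Sber]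

lemma Sber_eval_one (n : ℕ) : Sber n 1 = if n = 1 then 1 else 0 := by
  have eval_one : Polynomial.aeval (1 : ℝ) (Polynomial.bernoulli n)
      = algebraMap ℚ ℝ (bernoulli' n) := by
    rw [Polynomial.aeval_def, Polynomial.eval₂_at_one, Polynomial.bernoulli_eval_one]
  have eval_zero : Polynomial.aeval (0 : ℝ) (Polynomial.bernoulli n)
      = algebraMap ℚ ℝ (bernoulli n) := by
    rw [Polynomial.aeval_def, Polynomial.eval₂_at_zero, Polynomial.coeff_zero_eq_eval_zero,
      Polynomial.bernoulli_eval_zero]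
  rw [Sber, eval_one, eval_zero, ← map_sub]
  by_cases hn : n = 1
  · subst hn
    norm_num [bernoulli'_one, bernoulli_one]
  · simp [bernoulli_eq_bernoulli'_of_ne_one hn, hn]

@[simp] lemma DD_zero_zero (u v : E2) (f : E2 → ℝ) : DD u v 0 0 f = f := rfl

section Vertices

variable (V1 V2 V3 : E2)

lemma lam2_vertex1 : lam2 V1 V2 V3 V1 = 0 := by
  simp [lam2, detA]

lemma lam3_vertex1 : lam3 V1 V2 V3 V1 = 0 := by
  simp [lam3, detA, mul_comm]

lemma lam3_vertex2 : lam3 V1 V2 V3 V2 = 0 := by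
  simp [lam3, detA, mul_comm]

lemma lam2_vertex3 : lam2 V1 V2 V3 V3 = 0 := by
  simp [lam2, detA, mul_comm]

variable {V1 V2 V3}

lemma lam2_vertex2 (hA : detA V1 V2 V3 ≠ 0) : lam2 V1 V2 V3 V2 = 1 :=
  div_self hA

lemma lam3_vertex3 (hA : detA V1 V2 V3 ≠ 0) : lam3 V1 V2 V3 V3 = 1 :=
  div_self hA

end Vertices

section Evaluation

variable {V1 V2 V3 : E2} {m : ℕ} (f : E2 → ℝ) {x : E2}

lemma Pgen_of_lam2_eq_zero_of_lam3_eq_zero (h2 : lam2 V1 V2 V3 x = 0)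
    (h3 : lam3 V1 V2 V3 x = 0) : Pgen V1 V2 V3 m f x = f V1 := by
  simp [Pgen, h2, h3, Sber_eval_zero]

lemma Pgen_of_lam2_eq_one_of_lam3_eq_zero (hm : 1 ≤ m) (h2 : lam2 V1 V2 V3 x = 1)
    (h3 : lam3 V1 V2 V3 x = 0) : Pgen V1 V2 V3 m f x = f V2 := by
  have hmem : 1 ∈ Icc 1 m := mem_Icc.mpr ⟨le_rfl, hm⟩
  rw [Pgen, h2, h3]
  simp only [add_zero, div_one, one_pow, one_mul, Sber_eval_one]
  rw [sum_eq_single_of_mem 1 hmem (fun j _ hj ↦ by simp [hj]),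
    sum_eq_single_of_mem 1 hmem (fun i _ hi ↦ by simp [hi]),
    sum_eq_single_of_mem 1 (mem_Icc.mpr ⟨le_rfl, by omega⟩) (fun j _ hj ↦ by simp [hj])]
  norm_num

lemma Pgen_of_lam2_eq_zero_of_lam3_eq_one (hm : 1 ≤ m) (h2 : lam2 V1 V2 V3 x = 0)
    (h3 : lam3 V1 V2 V3 x = 1) : Pgen V1 V2 V3 m f x = f V3 := by
  rw [Pgen, h2, h3]
  simp only [zero_add, div_one, zero_div, Sber_eval_zero, Sber_eval_one, mul_zero, zero_mul,
    sum_const_zero, add_zero]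
  rw [sum_eq_single_of_mem 1 (mem_Icc.mpr ⟨le_rfl, hm⟩) (fun j _ hj ↦ by simp [hj])]
  simp

end Evaluation

theorem Pgen_interpolates_general (V1 V2 V3 : E2) (hA : detA V1 V2 V3 ≠ 0)
    (m : ℕ) (hm : 1 ≤ m)
    (f : E2 → ℝ) :
    Pgen V1 V2 V3 m f V1 = f V1 ∧
    Pgen V1 V2 V3 m f V2 = f V2 ∧
    Pgen V1 V2 V3 m f V3 = f V3 :=
  ⟨Pgen_of_lam2_eq_zero_of_lam3_eq_zero f (lam2_vertex1 ..) (lam3_vertex1 ..),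
    Pgen_of_lam2_eq_one_of_lam3_eq_zero f hm (lam2_vertex2 hA) (lam3_vertex2 ..),
    Pgen_of_lam2_eq_zero_of_lam3_eq_one f hm (lam2_vertex3 ..) (lam3_vertex3 hA)⟩

/-- **Interpolation conditions of the generalized Taylor polynomial.**
It interpolates `f` at all three vertices of the triangle. -/
theorem Pgen_interpolates (V1 V2 V3 : E2) (hA : detA V1 V2 V3 ≠ 0)
    (m : ℕ) (hm : 1 ≤ m)
    (U : Set E2) (hU : IsOpen U)
    (hTU : convexHull ℝ {V1, V2, V3} ⊆ U)
    (f : E2 → ℝ) (hf : ContDiffOn ℝ m f U) :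
    Pgen V1 V2 V3 m f V1 = f V1 ∧
    Pgen V1 V2 V3 m f V2 = f V2 ∧
    Pgen V1 V2 V3 m f V3 = f V3 :=
  Pgen_interpolates_general V1 V2 V3 hA m hm f
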